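/- arXiv:1207.3410 — 2 statements merged into one kernel-verified Lean document; each statement's English description precedes it below -/
import Mathlib

section
/- Let Γ be an infinite weighted graph with h̄(Γ) ≤ 1-ε₀ for some 0<ε₀<1, and suppose limsup_{r→∞} Q_r/vol(B_r) < ε₀, where Q_r is the total weight of edges within spheres up to radius r. Then vol(B_r) ≥ C₁ e^{C₂ r} for some constants C₁,C₂>0 and all r≥1 (exponential volume growth). -/
open Finset

variable {V : Type*}

noncomputable def deg (μ : V → V → ℝ) (x : V) : ℝ := ∑ᶠ y, μ x y

noncomputable def eSum (μ : V → V → ℝ) (A B : Finset V) : ℝ :=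
  ∑ x ∈ A, ∑ y ∈ B, μ x y

noncomputable def vol (μ : V → V → ℝ) (U : Finset V) : ℝ := ∑ x ∈ U, deg μ x

noncomputable def bdry (μ : V → V → ℝ) (U : Finset V) : ℝ := vol μ U - eSum μ U U

noncomputable def cheeger (μ : V → V → ℝ) (Ω : Finset V) : ℝ :=
  sInf {r : ℝ | ∃ U : Finset V, U.Nonempty ∧ U ⊆ Ω ∧ r = bdry μ U / vol μ U}

noncomputable def dualCheeger (μ : V → V → ℝ) (Ω : Finset V) : ℝ :=
  sSup {r : ℝ | ∃ V₁ V₂ : Finset V, V₁.Nonempty ∧ V₂.Nonempty ∧ Disjoint V₁ V₂ ∧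
    V₁ ⊆ Ω ∧ V₂ ⊆ Ω ∧ r = 2 * eSum μ V₁ V₂ / (vol μ V₁ + vol μ V₂)}

noncomputable def dLap (μ : V → V → ℝ) (Ω : Finset V) (f : V → ℝ) (x : V) : ℝ :=
  f x - (1 / deg μ x) * ∑ y ∈ Ω, μ x y * f y

def IsDirEigfun (μ : V → V → ℝ) (Ω : Finset V) (lam : ℝ) (f : V → ℝ) : Prop :=
  (∃ x ∈ Ω, f x ≠ 0) ∧ (∀ x ∉ Ω, f x = 0) ∧ ∀ x ∈ Ω, dLap μ Ω f x = lam * f x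

def IsDirEig (μ : V → V → ℝ) (Ω : Finset V) (lam : ℝ) : Prop :=
  ∃ f : V → ℝ, IsDirEigfun μ Ω lam f

noncomputable def lam1 (μ : V → V → ℝ) (Ω : Finset V) : ℝ :=
  sInf {l : ℝ | IsDirEig μ Ω l}

noncomputable def lamMax (μ : V → V → ℝ) (Ω : Finset V) : ℝ :=
  sSup {l : ℝ | IsDirEig μ Ω l}

def ConnectedOn (μ : V → V → ℝ) (Ω : Finset V) : Prop :=
  ∀ x ∈ Ω, ∀ y ∈ Ω,
    Relation.ReflTransGen (fun a b => a ∈ Ω ∧ b ∈ Ω ∧ μ a b ≠ 0) x y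

def BipartiteOn (μ : V → V → ℝ) (Ω : Finset V) : Prop :=
  ∃ U₁ U₂ : Finset V, Disjoint U₁ U₂ ∧ (U₁ : Set V) ∪ ↑U₂ = ↑Ω ∧
    (∀ x ∈ U₁, ∀ y ∈ U₁, μ x y = 0) ∧ (∀ x ∈ U₂, ∀ y ∈ U₂, μ x y = 0)

noncomputable def dualCheegerG {V : Type*} (μ : V → V → ℝ) : ℝ :=
  sSup {r : ℝ | ∃ V₁ V₂ : Finset V, V₁.Nonempty ∧ V₂.Nonempty ∧ Disjoint V₁ V₂ ∧
    r = 2 * eSum μ V₁ V₂ / (vol μ V₁ + vol μ V₂)}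

/-- Q_r : total weight of edges inside spheres of radius ≤ r. -/
noncomputable def sphQ {V : Type*} (μ : V → V → ℝ) (x₀ : V) (r : ℕ) : ℝ :=
  ∑ i ∈ Finset.range (r + 1),
    ∑ᶠ x ∈ {v : V | (SimpleGraph.fromRel fun a b => μ a b ≠ 0).dist x₀ v = i},
      ∑ᶠ y ∈ {v : V | (SimpleGraph.fromRel fun a b => μ a b ≠ 0).dist x₀ v = i}, μ x y

/-- volume of the ball of radius r. -/
noncomputable def volB {V : Type*} (μ : V → V → ℝ) (x₀ : V) (r : ℕ) : ℝ :=
  ∑ᶠ x ∈ {v : V | (SimpleGraph.fromRel fun a b => μ a b ≠ 0).dist x₀ v ≤ r}, deg μ x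

section myaux
variable {V : Type*} (μ : V → V → ℝ)

lemma sum_le_deg (hnn : ∀ x y, 0 ≤ μ x y) (hfin : ∀ x : V, (Function.support (μ x)).Finite)
    (x : V) (T : Finset V) : ∑ y ∈ T, μ x y ≤ deg μ x := by
  classical
  have hdeg : deg μ x = ∑ y ∈ (hfin x).toFinset, μ x y :=
    finsum_eq_finset_sum_of_support_subset _ (by simp)
  rw [hdeg]
  calc ∑ y ∈ T, μ x y = ∑ y ∈ T ∩ (hfin x).toFinset, μ x y := by
        refine (Finset.sum_subset Finset.inter_subset_left ?_).symm
        intro y hy hny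
        by_contra h
        exact hny (Finset.mem_inter.mpr ⟨hy, (hfin x).mem_toFinset.mpr h⟩)
    _ ≤ _ := Finset.sum_le_sum_of_subset_of_nonneg Finset.inter_subset_right
        (fun y _ _ => hnn x y)

lemma preconn (hconnG : ∀ x y : V, Relation.ReflTransGen (fun a b => μ a b ≠ 0) x y) :
    (SimpleGraph.fromRel fun a b => μ a b ≠ 0).Preconnected := by
  intro x y
  induction hconnG x y with
  | refl => rfl
  | @tail b c _h hs ih =>
      refine ih.trans ?_
      rcases eq_or_ne b c with h | h
      · exact h ▸ SimpleGraph.Reachable.refl _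
      · exact SimpleGraph.Adj.reachable ((SimpleGraph.fromRel_adj _ _ _).mpr ⟨h, Or.inl hs⟩)

end myaux

section graphaux
variable {W : Type*} (G : SimpleGraph W)

lemma dist_down (hc : G.Connected) (x₀ v : W) (n : ℕ) (h : G.dist x₀ v = n + 1) :
    ∃ u, G.Adj u v ∧ G.dist x₀ u = n := by
  have h' : G.dist v x₀ = n + 1 := by rwa [SimpleGraph.dist_comm]
  obtain ⟨p, hp⟩ := (hc v x₀).exists_walk_length_eq_dist
  rw [h'] at hp
  cases p with
  | nil => simp at hp
  | @cons _ u _ hadj q =>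
      refine ⟨u, hadj.symm, ?_⟩
      have h1 : G.dist x₀ u ≤ n := by
        rw [SimpleGraph.dist_comm]
        have := SimpleGraph.dist_le q
        simpa [Nat.succ_inj] using (by simpa using hp : q.length = n) ▸ this
      have h2 : G.dist u v ≤ 1 := by
        simpa using SimpleGraph.dist_le (SimpleGraph.Walk.cons hadj.symm SimpleGraph.Walk.nil)
      have h3 : G.dist x₀ v ≤ G.dist x₀ u + G.dist u v := hc.dist_triangle
      omega

lemma ball_fin (hc : G.Connected) (hloc : ∀ x : W, {y | G.Adj x y}.Finite) (x₀ : W) :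
    ∀ n : ℕ, {v | G.dist x₀ v ≤ n}.Finite := by
  intro n
  induction n with
  | zero =>
      refine (Set.finite_singleton x₀).subset ?_
      intro v hv
      simp only [Set.mem_setOf_eq, Nat.le_zero] at hv
      simp [(hc.dist_eq_zero_iff.mp hv).symm]
  | succ n ih =>
      refine (ih.union (ih.biUnion fun u _ => hloc u)).subset ?_
      intro v hv
      simp only [Set.mem_setOf_eq] at hv
      rcases Nat.lt_or_ge (G.dist x₀ v) (n+1) with h | h
      · exact Or.inl (Nat.lt_succ_iff.mp h)
      · have he : G.dist x₀ v = n + 1 := le_antisymm hv h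
        obtain ⟨u, hu, hud⟩ := dist_down G hc x₀ v n he
        exact Or.inr (Set.mem_biUnion (le_of_eq hud) hu)

lemma exists_dist_le (hc : G.Connected) (x₀ : W) :
    ∀ d n : ℕ, n ≤ d → (∃ v, G.dist x₀ v = d) → ∃ v, G.dist x₀ v = n := by
  intro d
  induction d with
  | zero => intro n hn hv; rw [Nat.le_zero.mp hn]; exact hv
  | succ d ih =>
      intro n hn hv
      rcases Nat.lt_or_ge n (d+1) with h | h
      · obtain ⟨v, hv⟩ := hv
        obtain ⟨u, _, hud⟩ := dist_down G hc x₀ v d hv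
        exact ih n (Nat.lt_succ_iff.mp h) ⟨u, hud⟩
      · exact (le_antisymm hn h) ▸ hv

lemma exists_dist [Infinite W] (hc : G.Connected) (hloc : ∀ x : W, {y | G.Adj x y}.Finite)
    (x₀ : W) (n : ℕ) : ∃ v, G.dist x₀ v = n := by
  obtain ⟨v, hv⟩ := ((ball_fin G hc hloc x₀ n).infinite_compl).nonempty
  simp only [Set.mem_compl_iff, Set.mem_setOf_eq, not_le] at hv
  exact exists_dist_le G hc x₀ (G.dist x₀ v) n (le_of_lt hv) ⟨v, rfl⟩

end graphaux
theorem stmt15 {V : Type*} [Infinite V] (μ : V → V → ℝ)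
    (hsymm : ∀ x y, μ x y = μ y x) (hnn : ∀ x y, 0 ≤ μ x y)
    (hfin : ∀ x : V, (Function.support (μ x)).Finite) (hdeg : ∀ x : V, 0 < deg μ x)
    (hconnG : ∀ x y : V, Relation.ReflTransGen (fun a b => μ a b ≠ 0) x y)
    (x₀ : V) (ε₀ : ℝ) (hε0 : 0 < ε₀) (hε1 : ε₀ < 1)
    (hbar : dualCheegerG μ ≤ 1 - ε₀)
    (hlimsup : Filter.limsup (fun r : ℕ => sphQ μ x₀ r / volB μ x₀ r) Filter.atTop < ε₀) :
    ∃ C₁ C₂ : ℝ, 0 < C₁ ∧ 0 < C₂ ∧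
      ∀ r : ℕ, 1 ≤ r → C₁ * Real.exp (C₂ * r) ≤ volB μ x₀ r := by
  classical
  set G := SimpleGraph.fromRel fun a b => μ a b ≠ 0 with hGdef
  have hc : G.Connected := (SimpleGraph.connected_iff _).mpr ⟨preconn μ hconnG, ⟨x₀⟩⟩
  have hadj_mu : ∀ x y, G.Adj x y → μ x y ≠ 0 := by
    intro x y h
    rw [hGdef, SimpleGraph.fromRel_adj] at h
    rcases h.2 with h' | h'
    · exact h'
    · rw [hsymm]; exact h'
  have hloc : ∀ x : V, {y | G.Adj x y}.Finite :=
    fun x => (hfin x).subset (fun y hy => hadj_mu x y hy)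
  have hballfin : ∀ n : ℕ, {v | G.dist x₀ v ≤ n}.Finite := ball_fin G hc hloc x₀
  have hSfin : ∀ i : ℕ, {v | G.dist x₀ v = i}.Finite :=
    fun i => (hballfin i).subset (fun v hv => le_of_eq hv)
  set Sf : ℕ → Finset V := fun i => (hSfin i).toFinset with hSfdef
  have hmemS : ∀ i v, v ∈ Sf i ↔ G.dist x₀ v = i := by
    intro i v; simp [hSfdef, Set.Finite.mem_toFinset]
  have hdist_adj : ∀ x y, μ x y ≠ 0 → x ≠ y → G.dist x₀ y ≤ G.dist x₀ x + 1 := by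
    intro x y hμ hne
    have hadj : G.Adj x y := (SimpleGraph.fromRel_adj _ _ _).mpr ⟨hne, Or.inl hμ⟩
    have h2 : G.dist x y ≤ 1 := by
      simpa using SimpleGraph.dist_le (SimpleGraph.Walk.cons hadj SimpleGraph.Walk.nil)
    have h3 : G.dist x₀ y ≤ G.dist x₀ x + G.dist x y := hc.dist_triangle
    omega
  have hnear : ∀ i j : ℕ, i + 1 < j → ∀ x ∈ Sf i, ∀ y ∈ Sf j, μ x y = 0 := by
    intro i j hij x hx y hy
    by_contra hμ
    have hxi := (hmemS i x).mp hx
    have hyj := (hmemS j y).mp hy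
    have hne : x ≠ y := fun h => by rw [h, hyj] at hxi; omega
    have := hdist_adj x y hμ hne
    omega
  have hSdisj : ∀ i j : ℕ, i ≠ j → Disjoint (Sf i) (Sf j) := by
    intro i j hij
    rw [Finset.disjoint_left]
    intro v hvi hvj
    rw [hmemS] at hvi hvj
    omega
  have hesymm : ∀ A B : Finset V, eSum μ A B = eSum μ B A := by
    intro A B
    rw [eSum, eSum, Finset.sum_comm]
    exact Finset.sum_congr rfl fun b _ => Finset.sum_congr rfl fun a _ => hsymm a b
  have hsupp : ∀ (i : ℕ) (x : V), x ∈ Sf i → ∀ y, μ x y ≠ 0 →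
      G.dist x₀ y + 1 = i ∨ G.dist x₀ y = i ∨ G.dist x₀ y = i + 1 := by
    intro i x hx y hμ
    have hxi := (hmemS i x).mp hx
    rcases eq_or_ne x y with h | h
    · right; left; rw [← h]; exact hxi
    · have h1 := hdist_adj x y hμ h
      have h2 := hdist_adj y x (by rw [← hsymm]; exact hμ) h.symm
      omega
  have hdegU : ∀ (i : ℕ) (x : V), x ∈ Sf (i+1) →
      deg μ x = ∑ y ∈ Sf i, μ x y + ∑ y ∈ Sf (i+1), μ x y + ∑ y ∈ Sf (i+2), μ x y := by
    intro i x hx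
    have h1 : deg μ x = ∑ y ∈ (Sf i ∪ Sf (i+1) ∪ Sf (i+2)), μ x y := by
      apply finsum_eq_finset_sum_of_support_subset
      intro y hy
      have := hsupp (i+1) x hx y hy
      simp only [Finset.coe_union, Set.mem_union, Finset.mem_coe, hmemS]
      omega
    rw [h1, Finset.sum_union (by
        rw [Finset.disjoint_union_left]
        exact ⟨hSdisj i (i+2) (by omega), hSdisj (i+1) (i+2) (by omega)⟩),
      Finset.sum_union (hSdisj i (i+1) (by omega))]
  have hdeg0 : ∀ x : V, x ∈ Sf 0 → deg μ x = ∑ y ∈ Sf 0, μ x y + ∑ y ∈ Sf 1, μ x y := by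
    intro x hx
    have h1 : deg μ x = ∑ y ∈ (Sf 0 ∪ Sf 1), μ x y := by
      apply finsum_eq_finset_sum_of_support_subset
      intro y hy
      have := hsupp 0 x hx y hy
      simp only [Finset.coe_union, Set.mem_union, Finset.mem_coe, hmemS]
      omega
    rw [h1, Finset.sum_union (hSdisj 0 1 (by omega))]
  have hvS : ∀ i : ℕ, vol μ (Sf (i+1)) =
      eSum μ (Sf i) (Sf (i+1)) + eSum μ (Sf (i+1)) (Sf (i+1)) + eSum μ (Sf (i+1)) (Sf (i+2)) := by
    intro i
    rw [vol, Finset.sum_congr rfl (fun x hx => hdegU i x hx),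
      Finset.sum_add_distrib, Finset.sum_add_distrib]
    rw [show ∑ x ∈ Sf (i+1), ∑ y ∈ Sf i, μ x y = eSum μ (Sf (i+1)) (Sf i) from rfl,
      hesymm (Sf (i+1)) (Sf i)]
    rfl
  have hvS0 : vol μ (Sf 0) = eSum μ (Sf 0) (Sf 0) + eSum μ (Sf 0) (Sf 1) := by
    rw [vol, Finset.sum_congr rfl (fun x hx => hdeg0 x hx), Finset.sum_add_distrib]
    rfl
  have hvolB : ∀ r : ℕ, volB μ x₀ r = ∑ i ∈ Finset.range (r+1), vol μ (Sf i) := by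
    intro r
    have h1 : volB μ x₀ r = ∑ x ∈ (hballfin r).toFinset, deg μ x := by
      rw [volB, ← hGdef, finsum_mem_eq_finite_toFinset_sum _ (hballfin r)]
    have h2 : (hballfin r).toFinset = (Finset.range (r+1)).biUnion Sf := by
      ext v
      simp only [Set.Finite.mem_toFinset, Set.mem_setOf_eq, Finset.mem_biUnion,
        Finset.mem_range, hmemS]
      constructor
      · intro h; exact ⟨G.dist x₀ v, by omega, rfl⟩
      · rintro ⟨i, hi, hd⟩; omega
    rw [h1, h2, Finset.sum_biUnion (fun i _ j _ hij => hSdisj i j hij)]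
    rfl
  have hQ : ∀ r : ℕ, sphQ μ x₀ r = ∑ i ∈ Finset.range (r+1), eSum μ (Sf i) (Sf i) := by
    intro r
    rw [sphQ]
    refine Finset.sum_congr rfl fun i _ => ?_
    rw [← hGdef, finsum_mem_eq_finite_toFinset_sum _ (hSfin i)]
    rw [show eSum μ (Sf i) (Sf i) = ∑ x ∈ (hSfin i).toFinset, ∑ y ∈ (hSfin i).toFinset, μ x y
      from rfl]
    exact Finset.sum_congr rfl fun x _ => finsum_mem_eq_finite_toFinset_sum _ (hSfin i)
  -- nonnegativity / positivity facts
  have hvolS_nonneg : ∀ i : ℕ, 0 ≤ vol μ (Sf i) :=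
    fun i => Finset.sum_nonneg fun x _ => (hdeg x).le
  have hvolBpos : ∀ r : ℕ, 0 < volB μ x₀ r := by
    intro r
    rw [hvolB]
    have h0 : 0 < vol μ (Sf 0) := by
      refine Finset.sum_pos (fun x _ => hdeg x) ⟨x₀, (hmemS 0 x₀).mpr ?_⟩
      exact SimpleGraph.dist_self
    calc (0:ℝ) < vol μ (Sf 0) := h0
      _ ≤ ∑ i ∈ Finset.range (r+1), vol μ (Sf i) :=
        Finset.single_le_sum (fun i _ => hvolS_nonneg i) (Finset.mem_range.mpr (by omega))
  have hvolBmono : Monotone (fun r : ℕ => volB μ x₀ r) := by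
    apply monotone_nat_of_le_succ
    intro r
    show volB μ x₀ r ≤ volB μ x₀ (r+1)
    rw [hvolB, hvolB, Finset.sum_range_succ (fun i => vol μ (Sf i)) (r+1)]
    exact le_add_of_nonneg_right (hvolS_nonneg _)
  have heSum_le_vol : ∀ A B : Finset V, eSum μ A B ≤ vol μ A :=
    fun A B => Finset.sum_le_sum fun x _ => sum_le_deg μ hnn hfin x B
  have hQle : ∀ r : ℕ, sphQ μ x₀ r ≤ volB μ x₀ r := by
    intro r
    rw [hQ, hvolB]
    exact Finset.sum_le_sum fun i _ => heSum_le_vol (Sf i) (Sf i)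
  -- main volume identity
  have hvBid : ∀ r : ℕ, ∑ i ∈ Finset.range (r+1), vol μ (Sf i) =
      (∑ i ∈ Finset.range (r+1), eSum μ (Sf i) (Sf i)) +
      2 * (∑ i ∈ Finset.range r, eSum μ (Sf i) (Sf (i+1))) + eSum μ (Sf r) (Sf (r+1)) := by
    intro r
    induction r with
    | zero =>
        norm_num [Finset.sum_range_one, Finset.sum_range_zero]
        exact hvS0
    | succ r ih =>
        rw [Finset.sum_range_succ, ih, hvS r,
          Finset.sum_range_succ (fun i => eSum μ (Sf i) (Sf i)) (r+1),
          Finset.sum_range_succ (fun i => eSum μ (Sf i) (Sf (i+1))) r]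
        ring
  -- eSum over biUnions
  have heL : ∀ (T : Finset ℕ) (B : Finset V),
      eSum μ (T.biUnion Sf) B = ∑ i ∈ T, eSum μ (Sf i) B := by
    intro T B
    rw [eSum, Finset.sum_biUnion (fun i _ j _ hij => hSdisj i j hij)]
    rfl
  have heR : ∀ (A : Finset V) (T : Finset ℕ),
      eSum μ A (T.biUnion Sf) = ∑ i ∈ T, eSum μ A (Sf i) := by
    intro A T
    rw [eSum,
      Finset.sum_congr rfl (fun x _ => Finset.sum_biUnion (fun i _ j _ hij => hSdisj i j hij)),
      Finset.sum_comm]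
    rfl
  have heUL : ∀ (A B C : Finset V), Disjoint A B →
      eSum μ (A ∪ B) C = eSum μ A C + eSum μ B C :=
    fun A B C h => Finset.sum_union h
  have heUR : ∀ (A B C : Finset V), Disjoint B C →
      eSum μ A (B ∪ C) = eSum μ A B + eSum μ A C := by
    intro A B C h
    rw [eSum, Finset.sum_congr rfl (fun x _ => Finset.sum_union h), Finset.sum_add_distrib]
    rfl
  have hezero : ∀ i j : ℕ, i ≠ j → ¬(i + 1 = j ∨ j + 1 = i) → eSum μ (Sf i) (Sf j) = 0 := by
    intro i j hij hnc
    rcases Nat.lt_or_ge i j with h | h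
    · exact Finset.sum_eq_zero fun x hx => Finset.sum_eq_zero fun y hy =>
        hnear i j (by omega) x hx y hy
    · rw [hesymm]
      exact Finset.sum_eq_zero fun y hy => Finset.sum_eq_zero fun x hx =>
        hnear j i (by omega) y hy x hx
  have hdiagsum : ∀ T : Finset ℕ, (∀ i ∈ T, ∀ j ∈ T, i ≠ j → ¬(i + 1 = j ∨ j + 1 = i)) →
      eSum μ (T.biUnion Sf) (T.biUnion Sf) = ∑ i ∈ T, eSum μ (Sf i) (Sf i) := by
    intro T hT
    rw [heL]
    refine Finset.sum_congr rfl fun i hi => ?_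
    rw [heR]
    refine Finset.sum_eq_single_of_mem i hi fun j hj hji => ?_
    exact hezero i j (Ne.symm hji) (hT i hi j hj (Ne.symm hji))
  -- total eSum of the ball
  have hA : ∀ r : ℕ, eSum μ ((Finset.range (r+1)).biUnion Sf) ((Finset.range (r+1)).biUnion Sf)
      = (∑ i ∈ Finset.range (r+1), eSum μ (Sf i) (Sf i)) +
        2 * ∑ i ∈ Finset.range r, eSum μ (Sf i) (Sf (i+1)) := by
    intro r
    induction r with
    | zero => simp [heL, heR]
    | succ r ih =>
        have hBements : (Finset.range (r+2)).biUnion Sf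
            = Sf (r+1) ∪ (Finset.range (r+1)).biUnion Sf := by
          rw [Finset.range_add_one, Finset.biUnion_insert]
        have hdisj : Disjoint (Sf (r+1)) ((Finset.range (r+1)).biUnion Sf) := by
          rw [Finset.disjoint_biUnion_right]
          intro j hj
          exact hSdisj (r+1) j (by simp only [Finset.mem_range] at hj; omega)
        have hSB : eSum μ (Sf (r+1)) ((Finset.range (r+1)).biUnion Sf)
            = eSum μ (Sf r) (Sf (r+1)) := by
          rw [heR]
          rw [Finset.sum_eq_single_of_mem r (Finset.mem_range.mpr (by omega))
            (fun j hj hjr => by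
              have hj' := Finset.mem_range.mp hj
              exact hezero (r+1) j (by omega) (by omega))]
          exact hesymm (Sf (r+1)) (Sf r)
        have hBS : eSum μ ((Finset.range (r+1)).biUnion Sf) (Sf (r+1))
            = eSum μ (Sf r) (Sf (r+1)) := by
          rw [hesymm]; exact hSB
        rw [hBements, heUL _ _ _ hdisj, heUR _ _ _ hdisj, heUR _ _ _ hdisj,
          hSB, hBS, ih,
          Finset.sum_range_succ (fun i => eSum μ (Sf i) (Sf i)) (r+1),
          Finset.sum_range_succ (fun i => eSum μ (Sf i) (Sf (i+1))) r]
        ring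
  -- bounded above: dual Cheeger set
  have hbdd : BddAbove {t : ℝ | ∃ V₁ V₂ : Finset V, V₁.Nonempty ∧ V₂.Nonempty ∧
      Disjoint V₁ V₂ ∧ t = 2 * eSum μ V₁ V₂ / (vol μ V₁ + vol μ V₂)} := by
    refine ⟨1, ?_⟩
    rintro t ⟨V₁, V₂, h1, h2, hd, rfl⟩
    have hv1 : 0 < vol μ V₁ := Finset.sum_pos (fun x _ => hdeg x) h1
    have hv2 : 0 < vol μ V₂ := Finset.sum_pos (fun x _ => hdeg x) h2
    rw [div_le_one (by linarith)]
    have e1 : eSum μ V₁ V₂ ≤ vol μ V₁ := heSum_le_vol V₁ V₂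
    have e2 : eSum μ V₂ V₁ ≤ vol μ V₂ := heSum_le_vol V₂ V₁
    rw [hesymm V₂ V₁] at e2
    linarith
  -- the dual Cheeger estimate applied to the even/odd partition of the ball
  have hEOkey : ∀ r : ℕ, 1 ≤ r →
      2 * (∑ i ∈ Finset.range r, eSum μ (Sf i) (Sf (i+1))) ≤ (1 - ε₀) * volB μ x₀ r := by
    intro r hr
    set T := Finset.range (r+1) with hT
    set TE := T.filter (fun i => Even i) with hTE
    set TO := T.filter (fun i => ¬ Even i) with hTO
    set E := TE.biUnion Sf with hE
    set O := TO.biUnion Sf with hO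
    have hEOdisj : Disjoint E O := by
      rw [Finset.disjoint_left]
      intro v hvE hvO
      obtain ⟨i, hi, hvi⟩ := Finset.mem_biUnion.mp hvE
      obtain ⟨j, hj, hvj⟩ := Finset.mem_biUnion.mp hvO
      have hij : i = j := by
        rw [hmemS] at hvi hvj; omega
      exact (Finset.mem_filter.mp hj).2 (hij ▸ (Finset.mem_filter.mp hi).2)
    have hunion : E ∪ O = T.biUnion Sf := by
      ext v
      simp only [hE, hO, Finset.mem_union, Finset.mem_biUnion, hTE, hTO, Finset.mem_filter]
      constructor
      · rintro (⟨i, ⟨hi, _⟩, hvi⟩ | ⟨i, ⟨hi, _⟩, hvi⟩) <;> exact ⟨i, hi, hvi⟩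
      · rintro ⟨i, hi, hvi⟩
        by_cases h : Even i
        · exact Or.inl ⟨i, ⟨hi, h⟩, hvi⟩
        · exact Or.inr ⟨i, ⟨hi, h⟩, hvi⟩
    have hEne : E.Nonempty := by
      refine ⟨x₀, Finset.mem_biUnion.mpr ⟨0, ?_, (hmemS 0 x₀).mpr SimpleGraph.dist_self⟩⟩
      simp [hTE, hT]
    have hOne : O.Nonempty := by
      obtain ⟨v, hv⟩ := exists_dist G hc hloc x₀ 1
      refine ⟨v, Finset.mem_biUnion.mpr ⟨1, ?_, (hmemS 1 v).mpr hv⟩⟩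
      simp only [hTO, hT, Finset.mem_filter, Finset.mem_range]
      exact ⟨by omega, by simp⟩
    have hvolEO : vol μ E + vol μ O = volB μ x₀ r := by
      rw [vol, vol, ← Finset.sum_union hEOdisj, hunion, hvolB,
        Finset.sum_biUnion (fun i _ j _ hij => hSdisj i j hij)]
      rfl
    have hEE : eSum μ E E = ∑ i ∈ TE, eSum μ (Sf i) (Sf i) := by
      refine hdiagsum TE fun i hi j hj hij => ?_
      have h1 := (Finset.mem_filter.mp hi).2
      have h2 := (Finset.mem_filter.mp hj).2
      rw [Nat.even_iff] at h1 h2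
      omega
    have hOO : eSum μ O O = ∑ i ∈ TO, eSum μ (Sf i) (Sf i) := by
      refine hdiagsum TO fun i hi j hj hij => ?_
      have h1 := (Finset.mem_filter.mp hi).2
      have h2 := (Finset.mem_filter.mp hj).2
      rw [Nat.even_iff] at h1 h2
      omega
    have hsplit : eSum μ (T.biUnion Sf) (T.biUnion Sf)
        = eSum μ E E + eSum μ E O + (eSum μ O E + eSum μ O O) := by
      rw [← hunion, heUL _ _ _ hEOdisj, heUR _ _ _ hEOdisj, heUR _ _ _ hEOdisj]
    have hQsplit : (∑ i ∈ TE, eSum μ (Sf i) (Sf i)) + (∑ i ∈ TO, eSum μ (Sf i) (Sf i))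
        = ∑ i ∈ T, eSum μ (Sf i) (Sf i) :=
      Finset.sum_filter_add_sum_filter_not T _ _
    have hOEEO : eSum μ O E = eSum μ E O := hesymm O E
    have hEOval : eSum μ E O = ∑ i ∈ Finset.range r, eSum μ (Sf i) (Sf (i+1)) := by
      have h5 : eSum μ (T.biUnion Sf) (T.biUnion Sf)
          = (∑ i ∈ T, eSum μ (Sf i) (Sf i))
            + 2 * ∑ i ∈ Finset.range r, eSum μ (Sf i) (Sf (i+1)) := hA r
      rw [hsplit, hEE, hOO, hOEEO] at h5
      linarith
    have hmem : 2 * eSum μ E O / (vol μ E + vol μ O) ∈ {t : ℝ | ∃ V₁ V₂ : Finset V,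
        V₁.Nonempty ∧ V₂.Nonempty ∧ Disjoint V₁ V₂ ∧
        t = 2 * eSum μ V₁ V₂ / (vol μ V₁ + vol μ V₂)} :=
      ⟨E, O, hEne, hOne, hEOdisj, rfl⟩
    have hble : 2 * eSum μ E O / (vol μ E + vol μ O) ≤ 1 - ε₀ :=
      le_trans (le_csSup hbdd hmem) hbar
    rw [div_le_iff₀ (by rw [hvolEO]; exact hvolBpos r)] at hble
    rw [hvolEO, hEOval] at hble
    linarith
  -- key inequality:  ε₀ vol(B_r) ≤ Q_r + (vol(B_{r+1}) - vol(B_r))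
  have hkey : ∀ r : ℕ, 1 ≤ r →
      ε₀ * volB μ x₀ r ≤ sphQ μ x₀ r + (volB μ x₀ (r+1) - volB μ x₀ r) := by
    intro r hr
    have h1 := hEOkey r hr
    have h2 : volB μ x₀ r = sphQ μ x₀ r
        + 2 * (∑ i ∈ Finset.range r, eSum μ (Sf i) (Sf (i+1)))
        + eSum μ (Sf r) (Sf (r+1)) := by
      rw [hvolB, hQ]
      have := hvBid r
      linarith
    have h3 : eSum μ (Sf r) (Sf (r+1)) ≤ volB μ x₀ (r+1) - volB μ x₀ r := by
      have hp : eSum μ (Sf r) (Sf (r+1)) ≤ vol μ (Sf (r+1)) := by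
        rw [hesymm]
        exact heSum_le_vol (Sf (r+1)) (Sf r)
      rw [hvolB (r+1), Finset.sum_range_succ, hvolB r]
      linarith
    linarith
  -- use the limsup hypothesis
  have hfbdd : Filter.IsBoundedUnder (· ≤ ·) Filter.atTop
      (fun r : ℕ => sphQ μ x₀ r / volB μ x₀ r) :=
    Filter.isBoundedUnder_of ⟨1, fun r => (div_le_one (hvolBpos r)).mpr (hQle r)⟩
  set L := Filter.limsup (fun r : ℕ => sphQ μ x₀ r / volB μ x₀ r) Filter.atTop with hL
  set ε := (L + ε₀)/2 with hε
  have hLe : L < ε := by rw [hε]; linarith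
  have hεe : ε < ε₀ := by rw [hε]; linarith
  have hev : ∀ᶠ r in Filter.atTop, sphQ μ x₀ r / volB μ x₀ r < ε :=
    Filter.eventually_lt_of_limsup_lt hLe hfbdd
  obtain ⟨R₀, hR₀⟩ := Filter.eventually_atTop.mp hev
  set R := max R₀ 1 with hR
  have hδ : 0 < ε₀ - ε := by linarith
  have hgrow : ∀ r : ℕ, R ≤ r →
      (1 + (ε₀ - ε)) * volB μ x₀ r ≤ volB μ x₀ (r+1) := by
    intro r hr
    have h1 := hkey r (le_trans (le_max_right _ _) hr)
    have h2 : sphQ μ x₀ r < ε * volB μ x₀ r :=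
      (div_lt_iff₀ (hvolBpos r)).mp (hR₀ r (le_trans (le_max_left _ _) hr))
    nlinarith [hvolBpos r]
  have hiter : ∀ k : ℕ, volB μ x₀ R * (1 + (ε₀ - ε))^k ≤ volB μ x₀ (R + k) := by
    intro k
    induction k with
    | zero => simp
    | succ k ih =>
        have h1 : volB μ x₀ R * (1 + (ε₀ - ε))^(k+1)
            = (1 + (ε₀ - ε)) * (volB μ x₀ R * (1 + (ε₀ - ε))^k) := by ring
        rw [h1, show R + (k+1) = (R + k) + 1 from rfl]
        calc (1 + (ε₀ - ε)) * (volB μ x₀ R * (1 + (ε₀ - ε))^k)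
            ≤ (1 + (ε₀ - ε)) * volB μ x₀ (R + k) :=
              mul_le_mul_of_nonneg_left ih (by linarith)
          _ ≤ volB μ x₀ (R + k + 1) := hgrow (R + k) (by omega)
  -- assemble the constants
  set C₂ := Real.log (1 + (ε₀ - ε)) with hC₂
  have hC₂pos : 0 < C₂ := Real.log_pos (by linarith)
  refine ⟨volB μ x₀ 1 * Real.exp (-(C₂ * R)), C₂,
    mul_pos (hvolBpos 1) (Real.exp_pos _), hC₂pos, ?_⟩
  intro r hr
  have hexp : volB μ x₀ 1 * Real.exp (-(C₂ * R)) * Real.exp (C₂ * r)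
      = volB μ x₀ 1 * Real.exp (C₂ * r - C₂ * R) := by
    rw [mul_assoc, ← Real.exp_add]
    ring_nf
  rcases le_or_gt r R with hcase | hcase
  · have h1 : Real.exp (C₂ * r - C₂ * R) ≤ 1 := by
      rw [Real.exp_le_one_iff]
      have : (r:ℝ) ≤ (R:ℝ) := Nat.cast_le.mpr hcase
      nlinarith
    calc volB μ x₀ 1 * Real.exp (-(C₂ * R)) * Real.exp (C₂ * r)
        = volB μ x₀ 1 * Real.exp (C₂ * r - C₂ * R) := hexp
      _ ≤ volB μ x₀ 1 * 1 := mul_le_mul_of_nonneg_left h1 (hvolBpos 1).le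
      _ = volB μ x₀ 1 := mul_one _
      _ ≤ volB μ x₀ r := hvolBmono hr
  · obtain ⟨k, hk⟩ : ∃ k : ℕ, r = R + k := ⟨r - R, by omega⟩
    have h2 : Real.exp (C₂ * r - C₂ * R) = (1 + (ε₀ - ε))^k := by
      have : C₂ * r - C₂ * R = (k : ℝ) * C₂ := by
        rw [hk]
        push_cast
        ring
      rw [this, Real.exp_nat_mul, hC₂, Real.exp_log (by linarith)]
    calc volB μ x₀ 1 * Real.exp (-(C₂ * R)) * Real.exp (C₂ * r)
        = volB μ x₀ 1 * (1 + (ε₀ - ε))^k := by rw [hexp, h2]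
      _ ≤ volB μ x₀ R * (1 + (ε₀ - ε))^k := by
          refine mul_le_mul_of_nonneg_right (hvolBmono ?_) (by positivity)
          exact le_max_right _ _
      _ ≤ volB μ x₀ (R + k) := hiter k
      _ = volB μ x₀ r := by rw [hk]
end

section
/- For the weighted half-line R_l (l≥2) with ball V_l(r)={0,1,...,r}, the first Dirichlet eigenvalue is λ₁(V_l(r)) = 1 - (2√(l-1)/l)·cos θ_{l,r}, where θ_{l,r} is the smallest positive solution of sin((r+1)θ)cos θ / sin(rθ) = l/(2(l-1)), with first eigenfunction f₁(x) = (l-1)^{-x/2} sin((r+1-x)θ_{l,r}), which is positive and strictly decreasing in x on {0,...,r}. -/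
open Finset

variable {V : Type*}

noncomputable def rlW (l : ℝ) (i j : ℕ) : ℝ :=
  if j = i + 1 then (l - 1) ^ i else if i = j + 1 then (l - 1) ^ j else 0

/-! With `b = √(l - 1)`, the function `x ↦ b⁻¹ ^ x * sin ((r + 1 - x) θ)` satisfies the
interior equations of the Dirichlet problem on `{0, …, r}` because
`sin (a + θ) + sin (a - θ) = 2 sin a cos θ`; it vanishes at `r + 1`, and the equation at the
vertex `0` is exactly the defining equation of `θ`. The defining equation has a root below
`π / (r + 1)` (intermediate value theorem), so minimality of `θ` gives `(r + 1) θ < π` and the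
eigenfunction is positive. A positive eigenfunction belongs to the smallest eigenvalue, and since
`λ > 0` the eigenvalue equation propagates `f₁ (x + 1) < f₁ x` from `x = 0` upwards. -/

open Real

section WeightedGraph

variable {μ : V → V → ℝ} {Ω : Finset V} {f : V → ℝ} {lam lam' : ℝ}

theorem sum_mul_eq_of_dLap_eq {x : V} (hx : deg μ x ≠ 0) (h : dLap μ Ω f x = lam * f x) :
    ∑ y ∈ Ω, μ x y * f y = (1 - lam) * deg μ x * f x := by
  unfold dLap at h
  field_simp at h
  linear_combination -h

/-- Pairing an eigenpair `(g, λ')` with `deg · f · |g|` and using the symmetry of `μ` gives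
`|1 - λ'| ≤ 1 - λ`. -/
theorem IsDirEigfun.le_of_isDirEig (hsymm : ∀ x y, μ x y = μ y x) (hnn : ∀ x y, 0 ≤ μ x y)
    (hdeg : ∀ x ∈ Ω, 0 < deg μ x) (hf : IsDirEigfun μ Ω lam f) (hpos : ∀ x ∈ Ω, 0 < f x)
    (hg : IsDirEig μ Ω lam') : lam ≤ lam' := by
  obtain ⟨g, ⟨x₀, hx₀, hgx₀⟩, -, hg⟩ := hg
  have hsum_f x (hx : x ∈ Ω) := sum_mul_eq_of_dLap_eq (hdeg x hx).ne' (hf.2.2 x hx)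
  have hsum_g x (hx : x ∈ Ω) := sum_mul_eq_of_dLap_eq (hdeg x hx).ne' (hg x hx)
  set S := ∑ x ∈ Ω, deg μ x * f x * |g x|
  have hS : 0 < S := by
    refine sum_pos' (fun x hx => ?_) ⟨x₀, hx₀, ?_⟩
    · have := hdeg x hx; have := hpos x hx; positivity
    · have := hdeg x₀ hx₀; have := hpos x₀ hx₀; have := abs_pos.2 hgx₀; positivity
  have key : |1 - lam'| * S ≤ (1 - lam) * S := calc
    |1 - lam'| * S = ∑ x ∈ Ω, f x * |∑ y ∈ Ω, μ x y * g y| := by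
      rw [mul_sum]
      refine sum_congr rfl fun x hx => ?_
      rw [hsum_g x hx, abs_mul, abs_mul, abs_of_pos (hdeg x hx)]
      ring
    _ ≤ ∑ x ∈ Ω, f x * ∑ y ∈ Ω, μ x y * |g y| := by
      refine sum_le_sum fun x hx => mul_le_mul_of_nonneg_left ?_ (hpos x hx).le
      refine (abs_sum_le_sum_abs _ _).trans_eq (sum_congr rfl fun y _ => ?_)
      rw [abs_mul, abs_of_nonneg (hnn x y)]
    _ = ∑ y ∈ Ω, |g y| * ∑ x ∈ Ω, μ y x * f x := by
      simp_rw [mul_sum]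
      rw [sum_comm]
      refine sum_congr rfl fun y _ => sum_congr rfl fun x _ => ?_
      rw [hsymm y x]
      ring
    _ = (1 - lam) * S := by
      rw [mul_sum]
      refine sum_congr rfl fun y hy => ?_
      rw [hsum_f y hy]
      ring
  have := le_of_mul_le_mul_right key hS
  linarith [le_abs_self (1 - lam')]

theorem lam1_eq_of_isDirEigfun_of_pos (hsymm : ∀ x y, μ x y = μ y x) (hnn : ∀ x y, 0 ≤ μ x y)
    (hdeg : ∀ x ∈ Ω, 0 < deg μ x) (hf : IsDirEigfun μ Ω lam f) (hpos : ∀ x ∈ Ω, 0 < f x) :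
    lam1 μ Ω = lam :=
  IsLeast.csInf_eq ⟨⟨f, hf⟩, fun _ hg => hf.le_of_isDirEig hsymm hnn hdeg hpos hg⟩

end WeightedGraph

theorem rpow_neg_natCast_div_two {a : ℝ} (ha : 0 ≤ a) (n : ℕ) :
    a ^ (-(n : ℝ) / 2) = (√a)⁻¹ ^ n := by
  rw [sqrt_eq_rpow, ← rpow_natCast, inv_rpow (rpow_nonneg ha _), ← rpow_mul ha, ← rpow_neg ha]
  ring_nf

theorem exists_sin_ratio_eq {l : ℝ} (hl : 2 ≤ l) {r : ℕ} (hr : 1 ≤ r) :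
    ∃ t, 0 < t ∧ t < π / (r + 1) ∧
      sin ((r + 1) * t) * cos t / sin (r * t) = l / (2 * (l - 1)) := by
  have hr' : (1 : ℝ) ≤ r := by exact_mod_cast hr
  set φ : ℝ → ℝ := fun t => 2 * (l - 1) * cos t * sin ((r + 1) * t) - l * sin (r * t)
  set t₀ := π / (2 * (r + 2))
  set t₁ := π / (r + 1)
  have ht₀ : 0 < t₀ := by positivity
  have ht₀₁ : t₀ ≤ t₁ := div_le_div_of_nonneg_left pi_pos.le (by positivity) (by linarith)
  have hsin_r {t : ℝ} (ht : 0 < t) (ht₁ : t ≤ t₁) : 0 < sin (r * t) := by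
    refine sin_pos_of_pos_of_lt_pi (by positivity) ?_
    calc r * t ≤ r * t₁ := by gcongr
      _ < (r + 1) * t₁ := by gcongr; linarith
      _ = π := mul_div_cancel₀ _ (by positivity)
  -- `φ t₀ = (l - 1) - sin (r t₀)` because `(r + 2) t₀ = π / 2`.
  have hφ₀ : 0 < φ t₀ := by
    have hprod : 2 * sin ((r + 1) * t₀) * cos t₀ = sin ((r + 2) * t₀) + sin (r * t₀) := by
      rw [two_mul_sin_mul_cos, add_comm]
      ring_nf
    have htop : (r + 2) * t₀ = π / 2 := by
      simp only [t₀]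
      field_simp
    have hlt : sin (r * t₀) < 1 := by
      rw [← sin_pi_div_two, ← htop]
      exact sin_lt_sin_of_lt_of_le_pi_div_two (by linarith [mul_nonneg (Nat.cast_nonneg r) ht₀.le,
        pi_pos]) htop.le (by linarith)
    simp only [φ, htop, sin_pi_div_two] at hprod ⊢
    nlinarith
  have hφ₁ : φ t₁ < 0 := by
    have : (r + 1) * t₁ = π := mul_div_cancel₀ _ (by positivity)
    simp only [φ, this, sin_pi, mul_zero, zero_sub, neg_lt_zero]
    exact mul_pos (by linarith) (hsin_r (by positivity) le_rfl)
  obtain ⟨t, ⟨ht₀t, htt₁⟩, hφt⟩ :=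
    intermediate_value_Icc' ht₀₁ (by fun_prop : ContinuousOn φ _) ⟨hφ₁.le, hφ₀.le⟩
  have ht : 0 < t := ht₀.trans_le ht₀t
  refine ⟨t, ht, htt₁.lt_of_ne (by rintro rfl; linarith), ?_⟩
  rw [div_eq_div_iff (hsin_r ht htt₁).ne' (by nlinarith)]
  simp only [φ] at hφt
  linarith

theorem one_sub_two_mul_sqrt_div_mul_cos_pos {l θ : ℝ} (hl : 1 < l) (hθ : 0 < θ) (hθπ : θ < π) :
    0 < 1 - 2 * √(l - 1) / l * cos θ := by
  have hcos : cos θ < 1 := by simpa using cos_lt_cos_of_nonneg_of_le_pi le_rfl hθπ.le hθ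
  have hsq := sq_sqrt (by linarith : 0 ≤ l - 1)
  have hb : 0 < √(l - 1) := sqrt_pos.2 (by linarith)
  have : 2 * √(l - 1) / l ≤ 1 := by
    rw [div_le_one (by linarith)]; nlinarith [sq_nonneg (√(l - 1) - 1)]
  nlinarith [mul_lt_of_lt_one_right (by positivity : 0 < 2 * √(l - 1) / l) hcos]

theorem rlW_comm (l : ℝ) (i j : ℕ) : rlW l i j = rlW l j i := by
  unfold rlW; split_ifs <;> first | rfl | omega

theorem rlW_nonneg {l : ℝ} (hl : 1 ≤ l) (i j : ℕ) : 0 ≤ rlW l i j := by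
  unfold rlW; split_ifs <;> first | exact pow_nonneg (by linarith) _ | exact le_rfl

theorem rlW_eq_zero {l : ℝ} {i j : ℕ} (h₁ : j ≠ i + 1) (h₂ : i ≠ j + 1) : rlW l i j = 0 := by
  simp [rlW, h₁, h₂]

theorem sum_rlW_zero_mul (l : ℝ) (f : ℕ → ℝ) {s : Finset ℕ} (hs : 1 ∈ s) :
    ∑ y ∈ s, rlW l 0 y * f y = f 1 := by
  rw [sum_eq_single_of_mem 1 hs fun y _ hy => by rw [rlW_eq_zero hy (by omega), zero_mul]]
  simp [rlW]

theorem sum_rlW_succ_mul (l : ℝ) (f : ℕ → ℝ) {x : ℕ} {s : Finset ℕ} (hx : x ∈ s)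
    (hx₂ : x + 2 ∈ s) :
    ∑ y ∈ s, rlW l (x + 1) y * f y = (l - 1) ^ x * f x + (l - 1) ^ (x + 1) * f (x + 2) := by
  rw [← sum_subset (s₁ := {x, x + 2}) (by simp [insert_subset_iff, hx, hx₂])
      fun y _ hy => by
        simp only [mem_insert, mem_singleton, not_or] at hy
        rw [rlW_eq_zero (by omega) (by omega), zero_mul],
    sum_pair (by omega)]
  rw [rlW, rlW, if_neg (by omega), if_pos rfl, if_pos rfl]

theorem deg_rlW_zero (l : ℝ) : deg (rlW l) 0 = 1 := by
  rw [deg, finsum_eq_sum_of_support_subset _ (s := {1}) fun y hy => by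
    by_contra h
    exact hy (rlW_eq_zero (by simpa using h) (by omega))]
  simpa using sum_rlW_zero_mul l 1 (mem_singleton_self 1)

theorem deg_rlW_succ (l : ℝ) (x : ℕ) : deg (rlW l) (x + 1) = (l - 1) ^ x * l := by
  rw [deg, finsum_eq_sum_of_support_subset _ (s := {x, x + 2}) fun y hy => by
    by_contra h
    simp only [coe_insert, coe_singleton, Set.mem_insert_iff, Set.mem_singleton_iff, not_or] at h
    exact hy (rlW_eq_zero (by omega) (by omega))]
  have := sum_rlW_succ_mul l 1 (x := x) (s := {x, x + 2}) (by simp) (by simp)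
  simp only [Pi.one_apply, mul_one] at this
  rw [this]
  ring

theorem deg_rlW_pos {l : ℝ} (hl : 1 < l) : ∀ x, 0 < deg (rlW l) x
  | 0 => by rw [deg_rlW_zero]; exact one_pos
  | x + 1 => by
    rw [deg_rlW_succ]
    have : 0 < l - 1 := by linarith
    positivity

theorem dLap_rlW_zero {l : ℝ} {f : ℕ → ℝ} {r : ℕ} (hr : 1 ≤ r) :
    dLap (rlW l) (range (r + 1)) f 0 = f 0 - f 1 := by
  rw [dLap, deg_rlW_zero, sum_rlW_zero_mul l f (s := range (r + 1)) (by simp; omega), div_one,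
    one_mul]

theorem dLap_rlW_succ {l : ℝ} (hl : l ≠ 1) {f : ℕ → ℝ} {r x : ℕ} (hx : x + 1 ≤ r)
    (hf : f (r + 1) = 0) :
    dLap (rlW l) (range (r + 1)) f (x + 1) = f (x + 1) - (f x + (l - 1) * f (x + 2)) / l := by
  have hsum := sum_rlW_succ_mul l f (x := x) (s := range (r + 2)) (by simp; omega) (by simp; omega)
  rw [sum_range_succ, hf, mul_zero, add_zero] at hsum
  have : (l - 1) ^ x ≠ 0 := pow_ne_zero _ (sub_ne_zero.2 hl)
  rw [dLap, hsum, deg_rlW_succ, one_div_mul_eq_div, pow_succ, mul_assoc, ← mul_add,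
    mul_div_mul_left _ _ this]

/-- The equation at `x + 1` reads `f x + (l - 1) f (x + 2) = l (1 - λ) f (x + 1)`, so `λ > 0` and
`f (x + 1) < f x` force `f (x + 2) < f (x + 1)`. -/
theorem IsDirEigfun.rlW_succ_lt {l lam : ℝ} (hl : 1 < l) {r : ℕ} {f : ℕ → ℝ} (hlam : 0 < lam)
    (hf : IsDirEigfun (rlW l) (range (r + 1)) lam f) (hpos : ∀ x ≤ r, 0 < f x) :
    ∀ x < r, f (x + 1) < f x := by
  have hout : f (r + 1) = 0 := hf.2.1 _ (by simp)
  have heq x (hx : x ≤ r) := hf.2.2 x (mem_range.2 (by omega))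
  intro x hx
  induction x with
  | zero =>
    have h := heq 0 (by omega)
    rw [dLap_rlW_zero (by omega)] at h
    nlinarith [hpos 0 (by omega)]
  | succ x ih =>
    have h := heq (x + 1) (by omega)
    rw [dLap_rlW_succ hl.ne' (by omega) hout] at h
    have hfx := hpos (x + 1) (by omega)
    have hlin : f x + (l - 1) * f (x + 2) = l * (1 - lam) * f (x + 1) := by
      field_simp at h; linarith
    have : (l - 1) * f (x + 1 + 1) < (l - 1) * f (x + 1) := by
      nlinarith [ih (by omega), mul_pos (by linarith : 0 < l) (mul_pos hlam hfx)]
    exact lt_of_mul_lt_mul_left this (by linarith)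

noncomputable def rlDampedSin (l c θ : ℝ) (x : ℕ) : ℝ := (√(l - 1))⁻¹ ^ x * sin ((c - x) * θ)

theorem rlDampedSin_recurrence {l : ℝ} (hl : 1 < l) (c θ : ℝ) (x : ℕ) :
    rlDampedSin l c θ (x + 1)
      - (rlDampedSin l c θ x + (l - 1) * rlDampedSin l c θ (x + 2)) / l
      = (1 - 2 * √(l - 1) / l * cos θ) * rlDampedSin l c θ (x + 1) := by
  set q := (√(l - 1))⁻¹
  have hbq : √(l - 1) * q = 1 := mul_inv_cancel₀ (sqrt_pos.2 (by linarith)).ne'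
  have hq2 : (l - 1) * q ^ 2 = 1 := by
    rw [← sq_sqrt (by linarith : 0 ≤ l - 1), ← mul_pow, hbq, one_pow]
  set A := (c - (x + 1)) * θ
  have h₀ : rlDampedSin l c θ x = q ^ x * sin (A + θ) := by
    rw [rlDampedSin, show (c - x) * θ = A + θ by ring]
  have h₁ : rlDampedSin l c θ (x + 1) = q ^ x * q * sin A := by
    rw [rlDampedSin, pow_succ]; push_cast; rfl
  have h₂ : rlDampedSin l c θ (x + 2) = q ^ x * q ^ 2 * sin (A - θ) := by
    rw [rlDampedSin, pow_add]; push_cast; rw [show (c - (x + 2)) * θ = A - θ by ring]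
  have hsum : sin (A + θ) + sin (A - θ) = 2 * sin A * cos θ := by rw [sin_add, sin_sub]; ring
  rw [h₀, h₁, h₂]
  linear_combination (-(q ^ x * sin (A - θ) / l)) * hq2 + (-(q ^ x / l)) * hsum
    + (2 * cos θ * q ^ x * sin A / l) * hbq

theorem isDirEigfun_rlW_rlDampedSin {l : ℝ} (hl : 1 < l) {r : ℕ} (hr : 1 ≤ r) {θ : ℝ}
    (hθ : 2 * (l - 1) * cos θ * sin ((r + 1) * θ) = l * sin (r * θ))
    (hne : sin ((r + 1) * θ) ≠ 0) {f : ℕ → ℝ}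
    (hf : ∀ x, f x = if x ≤ r then rlDampedSin l (r + 1) θ x else 0) :
    IsDirEigfun (rlW l) (range (r + 1)) (1 - 2 * √(l - 1) / l * cos θ) f := by
  have hfF : ∀ x ≤ r + 1, f x = rlDampedSin l (r + 1) θ x := by
    intro x hx
    rw [hf]
    split_ifs with h
    · rfl
    · obtain rfl : x = r + 1 := by omega
      simp [rlDampedSin]
  refine ⟨⟨0, by simp, by simpa [hfF 0 (by omega), rlDampedSin] using hne⟩,
    fun x hx => by rw [hf, if_neg (by simp at hx; omega)], ?_⟩
  rintro (_ | x) hx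
  · rw [dLap_rlW_zero hr, hfF 0 (by omega), hfF 1 (by omega)]
    have hb2 := sq_sqrt (by linarith : 0 ≤ l - 1)
    have hbq : √(l - 1) * (√(l - 1))⁻¹ = 1 := mul_inv_cancel₀ (sqrt_pos.2 (by linarith)).ne'
    have hll : l * l⁻¹ = 1 := mul_inv_cancel₀ (by positivity)
    simp only [rlDampedSin, pow_zero, pow_one, one_mul, CharP.cast_eq_zero, Nat.cast_one, sub_zero,
      add_sub_cancel_right]
    linear_combination ((√(l - 1))⁻¹ * l⁻¹) * hθ + ((√(l - 1))⁻¹ * sin (r * θ)) * hll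
      + (2 * cos θ * sin ((r + 1) * θ) * l⁻¹ * (√(l - 1))⁻¹) * hb2
      - (2 * cos θ * sin ((r + 1) * θ) * l⁻¹ * √(l - 1)) * hbq
  · rw [mem_range] at hx
    rw [dLap_rlW_succ hl.ne' (by omega) (by rw [hf, if_neg (by omega)]), hfF x (by omega),
      hfF (x + 1) (by omega), hfF (x + 2) (by omega)]
    exact rlDampedSin_recurrence hl _ _ _

theorem stmt19 (l : ℝ) (hl : 2 ≤ l) (r : ℕ) (hr : 1 ≤ r) (θ : ℝ) (hθpos : 0 < θ)
    (hθeq : Real.sin (((r : ℝ) + 1) * θ) * Real.cos θ / Real.sin ((r : ℝ) * θ)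
      = l / (2 * (l - 1)))
    (hθmin : ∀ θ' : ℝ, 0 < θ' →
      Real.sin (((r : ℝ) + 1) * θ') * Real.cos θ' / Real.sin ((r : ℝ) * θ')
        = l / (2 * (l - 1)) → θ ≤ θ')
    (f₁ : ℕ → ℝ)
    (hf₁ : ∀ x : ℕ, f₁ x = if x ≤ r then
      (l - 1) ^ (-(x : ℝ) / 2) * Real.sin (((r : ℝ) + 1 - (x : ℝ)) * θ) else 0) :
    lam1 (rlW l) (Finset.range (r + 1)) = 1 - (2 * Real.sqrt (l - 1) / l) * Real.cos θ ∧
    IsDirEigfun (rlW l) (Finset.range (r + 1))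
      (1 - (2 * Real.sqrt (l - 1) / l) * Real.cos θ) f₁ ∧
    (∀ x : ℕ, x ≤ r → 0 < f₁ x) ∧
    (∀ x : ℕ, x < r → f₁ (x + 1) < f₁ x) := by
  have hl1 : 1 < l := by linarith
  have hr' : (1 : ℝ) ≤ r := by exact_mod_cast hr
  have hθπ : ((r : ℝ) + 1) * θ < π := by
    obtain ⟨t, ht, htπ, hteq⟩ := exists_sin_ratio_eq hl hr
    rw [lt_div_iff₀ (by positivity), mul_comm] at htπ
    nlinarith [hθmin t ht hteq]
  have hsin {y : ℝ} (hy : 0 < y) (hyr : y ≤ r + 1) : 0 < sin (y * θ) :=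
    sin_pos_of_pos_of_lt_pi (by positivity) (by nlinarith)
  have hf : ∀ x, f₁ x = if x ≤ r then rlDampedSin l (r + 1) θ x else 0 := fun x => by
    rw [hf₁, rpow_neg_natCast_div_two (by linarith), rlDampedSin]
  have hpos : ∀ x ≤ r, 0 < f₁ x := fun x hx => by
    have : (x : ℝ) ≤ r := by exact_mod_cast hx
    rw [hf, if_pos hx, rlDampedSin]
    exact mul_pos (by positivity) (hsin (by linarith) (by linarith))
  have hθeq' : 2 * (l - 1) * cos θ * sin ((r + 1) * θ) = l * sin (r * θ) := by
    rw [div_eq_div_iff (hsin (by linarith) (by linarith)).ne' (by nlinarith)] at hθeq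
    linarith
  have heig := isDirEigfun_rlW_rlDampedSin hl1 hr hθeq' (hsin (by linarith) le_rfl).ne' hf
  have hlam := one_sub_two_mul_sqrt_div_mul_cos_pos hl1 hθpos (by nlinarith)
  refine ⟨lam1_eq_of_isDirEigfun_of_pos (rlW_comm l) (rlW_nonneg hl1.le)
    (fun x _ => deg_rlW_pos hl1 x) heig (fun x hx => hpos x (by simpa [Nat.lt_succ_iff] using hx)),
    heig, hpos, heig.rlW_succ_lt hl1 hlam hpos⟩
end
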